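/- Let R be a finite principal left ideal ring and P a left multiplicative property on R^n with P(0) = false. Then each code C_i generated by the greedy lexicode algorithm is a free left R-module, and the selected vectors a_{j_1}, ..., a_{j_k} form a basis of C_i. -/

import Mathlib

open Classical in
/-- The submodule `V_i = R{b_1, …, b_i}` generated by the first `i` basis vectors. -/
noncomputable def Vlevel {R : Type*} [Ring R] {n : ℕ}
    (b : Module.Basis (Fin n) R (Fin n → R)) (i : ℕ) : Submodule R (Fin n → R) :=
  Submodule.span R (⇑b '' {j : Fin n | (j : ℕ) < i})

open Classical in
/-- The level of a vector: the least `i` with `x ∈ V_i`, computed from the highest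
index of a nonzero coordinate with respect to the basis `b`. -/
noncomputable def lvl {R : Type*} [Ring R] {n : ℕ}
    (b : Module.Basis (Fin n) R (Fin n → R)) (x : Fin n → R) : ℕ :=
  Finset.univ.sup fun j : Fin n => if b.repr x j ≠ 0 then (j : ℕ) + 1 else 0

/-- The lexicographic ordering on `Rⁿ` induced by a total order `L` on `R` and the
ordered basis `b`: first compare levels, then compare coefficient vectors
lexicographically from the highest index down. -/
def lexLt {R : Type*} [Ring R] {n : ℕ} (L : LinearOrder R)
    (b : Module.Basis (Fin n) R (Fin n → R)) (x y : Fin n → R) : Prop :=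
  lvl b x < lvl b y ∨
    (lvl b x = lvl b y ∧ ∃ k : Fin n, L.lt (b.repr x k) (b.repr y k) ∧
      ∀ j : Fin n, k < j → b.repr x j = b.repr y j)

/-- A total order `L` on `R` is respectful if whenever `Rx ⊋ Ry` (both nonzero),
some unit multiple `αx` of `x` precedes every unit multiple `uy` of `y`. -/
def RespectfulOrder {R : Type*} [Ring R] (L : LinearOrder R) : Prop :=
  ∀ x y : R, x ≠ 0 → y ≠ 0 → Ideal.span {y} < Ideal.span {x} →
    ∃ α : Rˣ, ∀ u : Rˣ, L.lt ((α : R) * x) ((u : R) * y)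

/-- Admissibility of a candidate vector `x` at a stage with current code `C`:
`P(γx + c)` holds for every generator `γ ∈ Γ` and every `c ∈ C`. -/
def Admissible {R : Type*} [Ring R] {n : ℕ} (P : (Fin n → R) → Bool) (Γ : Set R)
    (C : Submodule R (Fin n → R)) (x : Fin n → R) : Prop :=
  ∀ γ ∈ Γ, ∀ c ∈ C, P (γ • x + c) = true

/-- A run of the greedy lexicode algorithm: `C 0 = 0`, and at each step
`i = 1, …, n` either the lexicographically smallest admissible vector
`a i ∈ V_i \ V_{i-1}` is selected and `C i = R·(a i) + C (i-1)`, or no vector of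
`V_i \ V_{i-1}` is admissible and `C i = C (i-1)`. -/
def GreedyRun {R : Type*} [Ring R] {n : ℕ} (L : LinearOrder R)
    (b : Module.Basis (Fin n) R (Fin n → R)) (P : (Fin n → R) → Bool) (Γ : Set R)
    (C : ℕ → Submodule R (Fin n → R)) (a : ℕ → (Fin n → R)) (sel : ℕ → Prop) : Prop :=
  C 0 = ⊥ ∧
  ∀ i : ℕ, 1 ≤ i → i ≤ n →
    ((sel i ∧ a i ∈ Vlevel b i ∧ a i ∉ Vlevel b (i - 1) ∧
        Admissible P Γ (C (i - 1)) (a i) ∧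
        (∀ x, x ∈ Vlevel b i → x ∉ Vlevel b (i - 1) →
          Admissible P Γ (C (i - 1)) x → x = a i ∨ lexLt L b (a i) x) ∧
        C i = Submodule.span R {a i} ⊔ C (i - 1))
      ∨ (¬ sel i ∧
          (∀ x, x ∈ Vlevel b i → x ∉ Vlevel b (i - 1) →
            ¬ Admissible P Γ (C (i - 1)) x) ∧
          C i = C (i - 1)))

/-!
If `a_i` is selected, no nonzero multiple `r • a_i` lies in `C_{i-1}`: a generator `γ ∈ Γ` of
`Rr` is a left multiple of `r`, so `γ • a_i ∈ C_{i-1}`, and admissibility at `c = -(γ • a_i)`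
would give `P 0`. As `C_{i-1}` is spanned by the earlier selected vectors, the selected family
is triangular, hence linearly independent, and it spans `C_i` by construction.
-/

open Submodule

theorem linearIndependent_of_smul_mem_span_Iio {R M ι : Type*} [Ring R] [AddCommGroup M]
    [Module R M] [LinearOrder ι] (v : ι → M)
    (hv : ∀ j (r : R), r • v j ∈ span R (v '' Set.Iio j) → r = 0) :
    LinearIndependent R v := by
  classical
  rw [linearIndependent_iff]
  intro l hl
  by_contra hne
  set j := l.support.max' (Finsupp.support_nonempty_iff.mpr hne)
  have hj : j ∈ l.support := Finset.max'_mem _ _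
  have hsum : l j • v j = -∑ k ∈ l.support.erase j, l k • v k := by
    rw [eq_neg_iff_add_eq_zero, add_comm, Finset.sum_erase_add _ _ hj, ← hl,
      Finsupp.linearCombination_apply, Finsupp.sum]
  have hlower : l j • v j ∈ span R (v '' Set.Iio j) := by
    rw [hsum]
    refine neg_mem (sum_mem fun k hk => smul_mem _ _ (subset_span ⟨k, ?_, rfl⟩))
    exact lt_of_le_of_ne (Finset.le_max' _ _ (Finset.mem_of_mem_erase hk))
      (Finset.ne_of_mem_erase hk)
  exact Finsupp.mem_support_iff.mp hj (hv j _ hlower)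

theorem Admissible.eq_zero_of_smul_mem {R : Type*} [Ring R] {n : ℕ}
    {P : (Fin n → R) → Bool} {Γ : Set R} {C : Submodule R (Fin n → R)} {x : Fin n → R}
    (hx : Admissible P Γ C x) (hP0 : P 0 = false)
    (hΓ : ∀ r : R, r ≠ 0 → ∃ γ ∈ Γ, Ideal.span {r} = Ideal.span {γ})
    {r : R} (hr : r • x ∈ C) : r = 0 := by
  by_contra hr0
  obtain ⟨γ, hγ, hspan⟩ := hΓ r hr0
  obtain ⟨s, rfl⟩ : ∃ s, s * r = γ :=
    Ideal.mem_span_singleton'.mp (hspan ▸ Ideal.mem_span_singleton_self γ)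
  have hγx : (s * r) • x ∈ C := by rw [mul_smul]; exact C.smul_mem s hr
  simpa [hP0] using hx _ hγ _ (C.neg_mem hγx)

namespace GreedyRun

variable {R : Type*} [Ring R] {n : ℕ} {L : LinearOrder R}
  {b : Module.Basis (Fin n) R (Fin n → R)} {P : (Fin n → R) → Bool} {Γ : Set R}
  {C : ℕ → Submodule R (Fin n → R)} {a : ℕ → (Fin n → R)} {sel : ℕ → Prop}

theorem step (hrun : GreedyRun L b P Γ C a sel) {i : ℕ} (hi : i < n) :
    (sel (i + 1) ∧ Admissible P Γ (C i) (a (i + 1)) ∧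
        C (i + 1) = span R {a (i + 1)} ⊔ C i) ∨
      (¬ sel (i + 1) ∧ C (i + 1) = C i) := by
  rcases hrun.2 (i + 1) (by omega) hi with ⟨hs, -, -, hadm, -, hC⟩ | ⟨hs, -, hC⟩
  · exact Or.inl ⟨hs, hadm, hC⟩
  · exact Or.inr ⟨hs, hC⟩

theorem eq_span_selected (hrun : GreedyRun L b P Γ C a sel) :
    ∀ i ≤ n, C i = span R (a '' {j | 1 ≤ j ∧ j ≤ i ∧ sel j})
  | 0, _ => by
    rw [hrun.1, eq_comm, span_eq_bot]
    rintro _ ⟨j, ⟨h1, h0, -⟩, rfl⟩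
    omega
  | i + 1, hi => by
    rcases hrun.step hi with ⟨hs, -, hC⟩ | ⟨hs, hC⟩
    · have hset : {j | 1 ≤ j ∧ j ≤ i + 1 ∧ sel j} =
          insert (i + 1) {j | 1 ≤ j ∧ j ≤ i ∧ sel j} := by
        ext j; simp only [Set.mem_ofPred_eq, Set.mem_insert_iff]; grind
      rw [hC, hset, Set.image_insert_eq, span_insert, hrun.eq_span_selected i (by omega)]
    · have hset : {j | 1 ≤ j ∧ j ≤ i + 1 ∧ sel j} = {j | 1 ≤ j ∧ j ≤ i ∧ sel j} := by
        ext j; simp only [Set.mem_ofPred_eq]; grind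
      rw [hC, hset, hrun.eq_span_selected i (by omega)]

end GreedyRun

theorem greedy_lexicode_free_general {R : Type*} [Ring R] {n : ℕ}
    (L : LinearOrder R)
    (b : Module.Basis (Fin n) R (Fin n → R))
    (P : (Fin n → R) → Bool)
    (hP0 : P 0 = false)
    (Γ : Set R)
    (hΓ : ∀ r : R, r ≠ 0 → ∃ γ ∈ Γ, Ideal.span {r} = Ideal.span {γ})
    (C : ℕ → Submodule R (Fin n → R)) (a : ℕ → (Fin n → R)) (sel : ℕ → Prop)
    (hrun : GreedyRun L b P Γ C a sel) :
    ∀ i ≤ n, ∃ β : Module.Basis {j : ℕ // 1 ≤ j ∧ j ≤ i ∧ sel j} R (C i),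
      ∀ j : {j : ℕ // 1 ≤ j ∧ j ≤ i ∧ sel j}, (β j : Fin n → R) = a (j : ℕ) := by
  intro i hi
  have hli : LinearIndependent R fun j : {j : ℕ // 1 ≤ j ∧ j ≤ i ∧ sel j} => a j := by
    refine linearIndependent_of_smul_mem_span_Iio _ fun ⟨j, hj1, hji, hsel⟩ r hr => ?_
    obtain ⟨k, rfl⟩ : ∃ k, j = k + 1 := ⟨j - 1, by omega⟩
    have hadm := ((hrun.step (by omega)).resolve_right fun h => h.1 hsel).2.1
    refine hadm.eq_zero_of_smul_mem hP0 hΓ ?_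
    rw [hrun.eq_span_selected k (by omega)]
    refine span_mono ?_ hr
    rintro _ ⟨j', hlt, rfl⟩
    exact ⟨j', ⟨j'.2.1, Nat.lt_succ_iff.mp hlt, j'.2.2.2⟩, rfl⟩
  have hspan : span R (Set.range fun j : {j : ℕ // 1 ≤ j ∧ j ≤ i ∧ sel j} => a j) = C i := by
    rw [hrun.eq_span_selected i hi, Set.image_eq_range]
    rfl
  exact ⟨(Module.Basis.span hli).map (LinearEquiv.ofEq _ _ hspan), fun j => by simp⟩

/-- Theorem: if `P` is left multiplicative with `P(0) = false`, then each code `C_i`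
produced by the greedy lexicode algorithm is a free left `R`-module, and the vectors
selected up to stage `i` form a basis of `C_i`. -/
theorem greedy_lexicode_free {R : Type*} [Ring R] [Fintype R] {n : ℕ}
    (hPLIR : ∀ I : Ideal R, ∃ g : R, I = Ideal.span {g})
    (L : LinearOrder R) (hL : RespectfulOrder L)
    (b : Module.Basis (Fin n) R (Fin n → R))
    (P : (Fin n → R) → Bool)
    (hP : ∀ (u : Rˣ) (x : Fin n → R), P ((u : R) • x) = P x)
    (hP0 : P 0 = false)
    (Γ : Set R)
    (hΓ : ∀ r : R, r ≠ 0 → ∃ γ ∈ Γ, Ideal.span {r} = Ideal.span {γ})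
    (C : ℕ → Submodule R (Fin n → R)) (a : ℕ → (Fin n → R)) (sel : ℕ → Prop)
    (hrun : GreedyRun L b P Γ C a sel) :
    ∀ i ≤ n, ∃ β : Module.Basis {j : ℕ // 1 ≤ j ∧ j ≤ i ∧ sel j} R (C i),
      ∀ j : {j : ℕ // 1 ≤ j ∧ j ≤ i ∧ sel j}, (β j : Fin n → R) = a (j : ℕ) :=
  greedy_lexicode_free_general L b P hP0 Γ hΓ C a sel hrun
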